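/- Let $d \geq 2$, $0 < r < 1$, let $\mu$ be a finite nonnegative Borel measure supported on $S^d \subset \mathbb{R}^{d+1}$, let $t_1, \dots, t_n \in S^d$ be distinct points, and let $R_1, \dots, R_n$ be a disjoint partition of $S^d$ into Borel sets with $t_k \in R_k$ for each $k$. Define the discrete measure $\nu_n = \sum_{k=1}^n \mu(R_k) \delta_{t_k}$ and the signed measure $\sigma = \mu - \nu_n$. Then for every $x \in S^d$, the Newtonian potential satisfies $\left| \int_{S^d} \|rx - y\|^{-(d-1)} \, d\sigma(y) \right| \leq (d-1)\,\mu(S^d)\,(1-r)^{-(d+1)} \cdot \max_{1 \leq k \leq n} \operatorname{diam}(R_k)$. -/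

import Mathlib

/-!
On each cell `R k` of the partition the kernel `y ↦ ‖r x - y‖^{-(d-1)}` differs from its value at
`t k` by at most its Lipschitz constant times `diam (R k)`. Since `‖r x - y‖ ≥ 1 - r` on the sphere,
the mean value theorem for `s ↦ s^{-(d-1)}` on `[1 - r, ∞)` gives the Lipschitz constant
`(d - 1) (1 - r)^{-d} ≤ (d - 1) (1 - r)^{-(d+1)}`. Integrating cell by cell, the errors add up to
at most this constant times `μ(S^d) max_k diam (R k)`.
-/

open MeasureTheory

theorem abs_integral_sub_sum_le_of_partition {α ι : Type*} [MeasurableSpace α] [Fintype ι]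
    {μ : Measure α} [IsFiniteMeasure μ] {R : ι → Set α} (hRmeas : ∀ k, MeasurableSet (R k))
    (hRdisj : Pairwise (Function.onFun Disjoint R)) (hRcover : μ (⋃ k, R k)ᶜ = 0)
    {f : α → ℝ} (hf : Integrable f μ) (t : ι → α) {ε : ℝ}
    (hfε : ∀ k, ∀ y ∈ R k, |f y - f (t k)| ≤ ε) :
    |∫ y, f y ∂μ - ∑ k, μ.real (R k) * f (t k)| ≤ ε * μ.real Set.univ := by
  have hcover : (⋃ k, R k) =ᵐ[μ] (Set.univ : Set α) := ae_eq_univ.mpr hRcover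
  have hsplit : ∫ y, f y ∂μ = ∑ k, ∫ y in R k, f y ∂μ := by
    rw [← integral_iUnion_fintype hRmeas hRdisj fun k => hf.integrableOn,
      setIntegral_congr_set hcover, setIntegral_univ]
  have hmass : ∑ k, μ.real (R k) = μ.real Set.univ := by
    rw [← measureReal_iUnion_fintype hRdisj hRmeas, measureReal_congr hcover]
  have hcell : ∀ k, |∫ y in R k, f y ∂μ - μ.real (R k) * f (t k)| ≤ ε * μ.real (R k) := by
    intro k
    rw [← smul_eq_mul, ← setIntegral_const,
      ← integral_sub hf.integrableOn (integrableOn_const (measure_ne_top μ _))]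
    exact norm_setIntegral_le_of_norm_le_const (measure_lt_top μ _) fun y hy =>
      (Real.norm_eq_abs _).trans_le (hfε k y hy)
  calc |∫ y, f y ∂μ - ∑ k, μ.real (R k) * f (t k)|
      = |∑ k, (∫ y in R k, f y ∂μ - μ.real (R k) * f (t k))| := by
        rw [hsplit, Finset.sum_sub_distrib]
    _ ≤ ∑ k, |∫ y in R k, f y ∂μ - μ.real (R k) * f (t k)| := Finset.abs_sum_le_sum_abs _ _
    _ ≤ ∑ k, ε * μ.real (R k) := Finset.sum_le_sum fun k _ => hcell k
    _ = ε * μ.real Set.univ := by rw [← Finset.mul_sum, hmass]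

theorem abs_rpow_neg_sub_rpow_neg_le {p c a b : ℝ} (hp : 0 ≤ p) (hc : 0 < c) (ha : c ≤ a)
    (hb : c ≤ b) : |a ^ (-p) - b ^ (-p)| ≤ p * c ^ (-(p + 1)) * |a - b| := by
  have hderiv : ∀ s ∈ Set.Ici c,
      HasDerivWithinAt (fun s : ℝ => s ^ (-p)) (-p * s ^ (-p - 1)) (Set.Ici c) s :=
    fun s hs => (Real.hasDerivAt_rpow_const (Or.inl (hc.trans_le hs).ne')).hasDerivWithinAt
  have hbound : ∀ s ∈ Set.Ici c, ‖-p * s ^ (-p - 1)‖ ≤ p * c ^ (-(p + 1)) := by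
    intro s hs
    have hs0 : 0 < s := hc.trans_le hs
    rw [norm_mul, norm_neg, Real.norm_of_nonneg hp, Real.norm_of_nonneg (by positivity),
      show -(p + 1) = -p - 1 by ring]
    exact mul_le_mul_of_nonneg_left (Real.rpow_le_rpow_of_nonpos hc hs (by linarith)) hp
  simpa only [Real.norm_eq_abs] using
    (convex_Ici c).norm_image_sub_le_of_norm_hasDerivWithin_le hderiv hbound hb ha

theorem abs_norm_sub_rpow_neg_sub_le {E : Type*} [SeminormedAddCommGroup E] {p c : ℝ}
    (hp : 0 ≤ p) (hc : 0 < c) {z y y' : E} (hy : c ≤ ‖z - y‖) (hy' : c ≤ ‖z - y'‖) :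
    |‖z - y‖ ^ (-p) - ‖z - y'‖ ^ (-p)| ≤ p * c ^ (-(p + 1)) * ‖y - y'‖ := by
  have hnorm : |‖z - y‖ - ‖z - y'‖| ≤ ‖y - y'‖ := by
    simpa only [sub_sub_sub_cancel_left, norm_sub_rev y'] using abs_norm_sub_norm_le (z - y) (z - y')
  exact (abs_rpow_neg_sub_rpow_neg_le hp hc hy hy').trans
    (mul_le_mul_of_nonneg_left hnorm (by positivity))

theorem one_sub_le_norm_smul_sub {E : Type*} [SeminormedAddCommGroup E] [NormedSpace ℝ E]
    {r : ℝ} (hr : 0 ≤ r) {x y : E} (hx : ‖x‖ = 1) (hy : ‖y‖ = 1) : 1 - r ≤ ‖r • x - y‖ := by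
  simpa [norm_smul, abs_of_nonneg hr, hx, hy, norm_sub_rev] using norm_sub_norm_le y (r • x)

theorem integrable_norm_sub_rpow_neg {E : Type*} [NormedAddCommGroup E] [MeasurableSpace E]
    [OpensMeasurableSpace E] {μ : Measure E} [IsFiniteMeasure μ] {p c : ℝ} (hp : 0 ≤ p)
    (hc : 0 < c) {z : E} (hz : ∀ᵐ y ∂μ, c ≤ ‖z - y‖) :
    Integrable (fun y => ‖z - y‖ ^ (-p)) μ := by
  have hmeas : Measurable fun y => ‖z - y‖ ^ (-p) :=
    (by fun_prop : Continuous fun y => ‖z - y‖).measurable.pow_const _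
  refine Integrable.of_bound hmeas.aestronglyMeasurable (c ^ (-p)) ?_
  filter_upwards [hz] with y hy
  rw [Real.norm_of_nonneg (by positivity)]
  exact Real.rpow_le_rpow_of_nonpos hc hy (neg_nonpos.mpr hp)

theorem stmt_4_general (d n : ℕ) (hd : 2 ≤ d) (r : ℝ) (hr : 0 < r) (hr1 : r < 1)
    (μ : Measure (EuclideanSpace ℝ (Fin (d + 1)))) [IsFiniteMeasure μ]
    (hμsupp : μ (Metric.sphere (0 : EuclideanSpace ℝ (Fin (d + 1))) 1)ᶜ = 0)
    (t : Fin n → EuclideanSpace ℝ (Fin (d + 1)))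
    (R : Fin n → Set (EuclideanSpace ℝ (Fin (d + 1))))
    (hRmeas : ∀ k, MeasurableSet (R k))
    (hRdisj : Pairwise (Function.onFun Disjoint R))
    (hRcover : (⋃ k, R k) = Metric.sphere (0 : EuclideanSpace ℝ (Fin (d + 1))) 1)
    (htR : ∀ k, t k ∈ R k)
    (x : EuclideanSpace ℝ (Fin (d + 1)))
    (hx : x ∈ Metric.sphere (0 : EuclideanSpace ℝ (Fin (d + 1))) 1) :
    |(∫ y, ‖r • x - y‖ ^ (-((d : ℝ) - 1)) ∂μ) -
        ∑ k, (μ (R k)).toReal * ‖r • x - t k‖ ^ (-((d : ℝ) - 1))|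
      ≤ ((d : ℝ) - 1) * (μ Set.univ).toReal * (1 - r) ^ (-((d : ℝ) + 1)) *
        (⨆ k, Metric.diam (R k)) := by
  set S := Metric.sphere (0 : EuclideanSpace ℝ (Fin (d + 1))) 1
  set p : ℝ := (d : ℝ) - 1
  set D := ⨆ k, Metric.diam (R k)
  have hp : 0 ≤ p := by
    have : (2 : ℝ) ≤ d := by exact_mod_cast hd
    linarith
  have h1r : 0 < 1 - r := sub_pos.mpr hr1
  have hRS : ∀ k, R k ⊆ S := fun k => hRcover ▸ Set.subset_iUnion R k
  have hdist : ∀ y ∈ S, 1 - r ≤ ‖r • x - y‖ := fun y hy =>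
    one_sub_le_norm_smul_sub hr.le (mem_sphere_zero_iff_norm.mp hx) (mem_sphere_zero_iff_norm.mp hy)
  have hdiam : ∀ k, ∀ y ∈ R k, ‖y - t k‖ ≤ D := fun k y hy =>
    dist_eq_norm y (t k) ▸
      (Metric.dist_le_diam_of_mem (Metric.isBounded_sphere.subset (hRS k)) hy (htR k)).trans
        (le_ciSup (f := fun k => Metric.diam (R k)) (Set.finite_range _).bddAbove k)
  have hint : Integrable (fun y => ‖r • x - y‖ ^ (-p)) μ := integrable_norm_sub_rpow_neg hp h1r <|
    Filter.mem_of_superset (mem_ae_iff.mpr hμsupp) hdist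
  have hquad := abs_integral_sub_sum_le_of_partition hRmeas hRdisj (by rwa [hRcover]) hint t
    (ε := p * (1 - r) ^ (-(p + 1)) * D) fun k y hy =>
      (abs_norm_sub_rpow_neg_sub_le hp h1r (hdist y (hRS k hy)) (hdist _ (hRS k (htR k)))).trans
        (mul_le_mul_of_nonneg_left (hdiam k y hy) (by positivity))
  have hD : 0 ≤ D := Real.iSup_nonneg fun k => Metric.diam_nonneg
  calc _ ≤ p * (1 - r) ^ (-(p + 1)) * D * μ.real Set.univ := hquad
    _ ≤ p * (1 - r) ^ (-((d : ℝ) + 1)) * D * μ.real Set.univ := by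
        gcongr p * ?_ * D * _
        exact Real.rpow_le_rpow_of_exponent_ge h1r (by linarith) (by linarith)
    _ = _ := by rw [measureReal_def]; ring

/-- Theorem 4(a): discrepancy bound for the Newtonian potential of `σ = μ - ν_n`,
where `ν_n = ∑ μ(R_k) δ_{t_k}` for a partition `R_1, …, R_n` of `S^d` with `t_k ∈ R_k`:
`|U^σ(rx)| ≤ (d-1) ‖μ‖ (1-r)^{-(d+1)} max_k diam(R_k)` for `x ∈ S^d`. -/
theorem stmt_4 (d n : ℕ) (hd : 2 ≤ d) (hn : 1 ≤ n) (r : ℝ) (hr : 0 < r) (hr1 : r < 1)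
    (μ : Measure (EuclideanSpace ℝ (Fin (d + 1)))) [IsFiniteMeasure μ]
    (hμsupp : μ (Metric.sphere (0 : EuclideanSpace ℝ (Fin (d + 1))) 1)ᶜ = 0)
    (t : Fin n → EuclideanSpace ℝ (Fin (d + 1)))
    (ht : ∀ k, t k ∈ Metric.sphere (0 : EuclideanSpace ℝ (Fin (d + 1))) 1)
    (htinj : Function.Injective t)
    (R : Fin n → Set (EuclideanSpace ℝ (Fin (d + 1))))
    (hRmeas : ∀ k, MeasurableSet (R k))
    (hRdisj : Pairwise (Function.onFun Disjoint R))
    (hRcover : (⋃ k, R k) = Metric.sphere (0 : EuclideanSpace ℝ (Fin (d + 1))) 1)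
    (htR : ∀ k, t k ∈ R k)
    (x : EuclideanSpace ℝ (Fin (d + 1)))
    (hx : x ∈ Metric.sphere (0 : EuclideanSpace ℝ (Fin (d + 1))) 1) :
    |(∫ y, ‖r • x - y‖ ^ (-((d : ℝ) - 1)) ∂μ) -
        ∑ k, (μ (R k)).toReal * ‖r • x - t k‖ ^ (-((d : ℝ) - 1))|
      ≤ ((d : ℝ) - 1) * (μ Set.univ).toReal * (1 - r) ^ (-((d : ℝ) + 1)) *
        (⨆ k, Metric.diam (R k)) :=
  stmt_4_general d n hd r hr hr1 μ hμsupp t R hRmeas hRdisj hRcover htR x hx
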